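/- arXiv:2601.08399 — 4 statements merged into one kernel-verified Lean document; each statement's English description precedes it below -/
import Mathlib

section
/- Let A be a commutative ring, d ≥ 1, and E = A[h]/(h^d + c₁h^{d-1} + ⋯ + c_d), which is free over A with basis 1, h, …, h^{d-1}. Let q : E → A be the A-linear map extracting the coefficient of h^{d-1}. Let B be an A-module, let i : E → B be an A-linear map, μ : B → B an A-linear map, and π : B → A', ι : A → A' A-linear maps with ι injective, such that (1) π ∘ i = ι ∘ q, and (2) i(h·x) = μ(i(x)) for all x ∈ E. Then i is injective. -/
theorem stmt_5 {A : Type*} [CommRing A] {E : Type*} [CommRing E] [Algebra A E]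
    (d : ℕ) (hd : 1 ≤ d) (h : E) (b : Module.Basis (Fin d) A E)
    (hb : ∀ j : Fin d, b j = h ^ (j : ℕ))
    {B A' : Type*} [AddCommGroup B] [Module A B] [AddCommGroup A'] [Module A A']
    (i : E →ₗ[A] B) (μ : B →ₗ[A] B) (π : B →ₗ[A] A') (ι : A →ₗ[A] A')
    (hι : Function.Injective ι)
    (h1 : ∀ x : E, π (i x) = ι (b.repr x ⟨d - 1, by omega⟩))
    (h2 : ∀ x : E, i (h * x) = μ (i x)) :
    Function.Injective i := by
  have hpow : ∀ (m : ℕ) (x : E), i (h ^ m * x) = (μ ^ m) (i x) := by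
    intro m
    induction m with
    | zero => intro x; simp
    | succ n ih =>
      intro x
      have : h ^ (n + 1) * x = h * (h ^ n * x) := by ring
      rw [this, h2, ih, ← Module.End.mul_apply, ← pow_succ']
  -- key: all top coefficients of an element of the kernel vanish
  have key : ∀ k : ℕ, ∀ x : E, i x = 0 → ∀ j : Fin d, d - k ≤ (j : ℕ) →
      b.repr x j = 0 := by
    intro k
    induction k with
    | zero =>
      intro x hx j hj
      exact absurd j.isLt (by omega)
    | succ k ih =>
      intro x hx j hj
      by_cases hcase : d - k ≤ (j : ℕ)
      · exact ih x hx j hcase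
      · have hkd : k < d := by omega
        have hjval : (j : ℕ) = d - 1 - k := by omega
        -- π (i (h^k * x)) = 0
        have hik : i (h ^ k * x) = 0 := by rw [hpow, hx, map_zero]
        have hπ : ι (b.repr (h ^ k * x) ⟨d - 1, by omega⟩) = 0 := by
          rw [← h1, hik, map_zero]
        have htop : b.repr (h ^ k * x) ⟨d - 1, by omega⟩ = 0 := by
          apply hι; rw [hπ, map_zero]
        -- compute the representation
        have hx' : h ^ k * x = ∑ j' : Fin d, b.repr x j' • h ^ (k + (j' : ℕ)) := by
          conv_lhs => rw [← b.sum_repr x]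
          rw [Finset.mul_sum]
          refine Finset.sum_congr rfl fun j' _ => ?_
          rw [hb j', mul_smul_comm, ← pow_add]
        have hrepr : b.repr (h ^ k * x) ⟨d - 1, by omega⟩ = b.repr x j := by
          rw [hx', map_sum, Finset.sum_apply']
          rw [Finset.sum_eq_single j]
          · rw [map_smul, Finsupp.smul_apply]
            have : h ^ (k + (j : ℕ)) = b ⟨d - 1, by omega⟩ := by
              rw [hb]; congr 1; simp; omega
            rw [this, b.repr_self, Finsupp.single_eq_same, smul_eq_mul, mul_one]
          · intro j' _ hne
            by_cases hj' : d - k ≤ (j' : ℕ)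
            · rw [map_smul, Finsupp.smul_apply, ih x hx j' hj', zero_smul]
            · rw [map_smul, Finsupp.smul_apply]
              have hlt : k + (j' : ℕ) < d := by omega
              have : h ^ (k + (j' : ℕ)) = b ⟨k + (j' : ℕ), hlt⟩ := by rw [hb]
              rw [this, b.repr_self, Finsupp.single_apply]
              rw [if_neg, smul_zero]
              intro hc
              apply hne
              have : k + (j' : ℕ) = d - 1 := by
                have := Fin.mk.inj_iff.mp hc
                omega
              exact Fin.ext (by omega)
          · intro hmem
            exact absurd (Finset.mem_univ j) hmem
        rw [← hrepr, htop]
  -- conclude injectivity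
  have kerz : ∀ x : E, i x = 0 → x = 0 := by
    intro x hx
    have hz : b.repr x = 0 := by
      ext j
      exact key d x hx j (by omega)
    exact b.repr.map_eq_zero_iff.mp hz
  intro x y hxy
  have : i (x - y) = 0 := by rw [map_sub, hxy, sub_self]
  have := kerz _ this
  exact sub_eq_zero.mp this
end

section
/- Let B be a commutative ring, e, f ∈ B, and let S ⊆ B be a subring containing e+f and e·f. Let T : B → B be an S-linear map (T(s·x) = s·T(x) for s ∈ S) with T(1) = 3 and T(f) = 2e + 2f. Then for every k ≥ 1, T(f^k) = 2e^k + 2f^k + Σ_{i=1}^{k-1} e^i f^{k-i}. -/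
open Finset

private def Dsum {B : Type*} [CommRing B] (e f : B) (n : ℕ) : B :=
  ∑ i ∈ range n, e ^ i * f ^ (n - 1 - i)

private lemma Dsum_succ_f {B : Type*} [CommRing B] (e f : B) (n : ℕ) :
    Dsum e f (n + 1) = f * Dsum e f n + e ^ n := by
  unfold Dsum
  rw [Finset.sum_range_succ, Finset.mul_sum]
  congr 1
  · apply Finset.sum_congr rfl
    intro i hi
    simp only [Finset.mem_range] at hi
    have h1 : n + 1 - 1 - i = (n - 1 - i) + 1 := by omega
    rw [h1, pow_succ]
    ring
  · simp

private lemma Dsum_succ_e {B : Type*} [CommRing B] (e f : B) (n : ℕ) :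
    Dsum e f (n + 1) = e * Dsum e f n + f ^ n := by
  unfold Dsum
  rw [Finset.sum_range_succ', Finset.mul_sum]
  congr 1
  · apply Finset.sum_congr rfl
    intro i hi
    simp only [Finset.mem_range] at hi
    have h1 : n + 1 - 1 - (i + 1) = n - 1 - i := by omega
    rw [h1, pow_succ]
    ring
  · simp

private lemma Dsum_rec {B : Type*} [CommRing B] (e f : B) (n : ℕ) :
    Dsum e f (n + 2) = (e + f) * Dsum e f (n + 1) - e * f * Dsum e f n := by
  have h1 : Dsum e f (n + 2) = e * Dsum e f (n + 1) + f ^ (n + 1) := Dsum_succ_e e f (n + 1)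
  have h2 : Dsum e f (n + 1) = e * Dsum e f n + f ^ n := Dsum_succ_e e f n
  rw [h1, h2]
  ring

private lemma Dsum_Icc {B : Type*} [CommRing B] (e f : B) (m : ℕ) :
    Dsum e f (m + 2) = e ^ (m + 1) + f ^ (m + 1) +
      ∑ i ∈ Icc 1 m, e ^ i * f ^ (m + 1 - i) := by
  unfold Dsum
  rw [Finset.sum_range_succ', Finset.sum_range_succ, ← Finset.Ico_add_one_right_eq_Icc,
    Finset.sum_Ico_eq_sum_range]
  have key : ∀ i ∈ range (m + 1 - 1), e ^ (1 + i) * f ^ (m + 1 - (1 + i))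
      = e ^ (i + 1) * f ^ (m + 2 - 1 - (i + 1)) := by
    intro i hi
    simp only [Finset.mem_range] at hi
    congr 2 <;> omega
  rw [Finset.sum_congr (congrArg range (by omega : m + 1 - 1 = m))
    (fun i hi => key i (by simp only [Finset.mem_range] at hi ⊢; omega))]
  have h0 : m + 2 - 1 - 0 = m + 1 := by omega
  have hm : m + 2 - 1 - (m + 1) = 0 := by omega
  rw [h0, hm]
  ring

open Finset in
theorem stmt_9 {B : Type*} [CommRing B] (e f : B) (S : Subring B)
    (he : e + f ∈ S) (hef : e * f ∈ S) (T : B → B)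
    (Tadd : ∀ x y : B, T (x + y) = T x + T y)
    (Tsmul : ∀ s ∈ S, ∀ x : B, T (s * x) = s * T x)
    (T1 : T 1 = 3) (Tf : T f = 2 * e + 2 * f) :
    ∀ k : ℕ, 1 ≤ k →
      T (f ^ k) = 2 * e ^ k + 2 * f ^ k + ∑ i ∈ Icc 1 (k - 1), e ^ i * f ^ (k - i) := by
  have T0 : T (f ^ 0) = 3 := by simpa using T1
  have key : ∀ n : ℕ, T (f ^ (n + 2)) + e * f * T (f ^ n) = (e + f) * T (f ^ (n + 1)) := by
    intro n
    rw [← Tsmul (e * f) hef (f ^ n), ← Tadd, ← Tsmul (e + f) he (f ^ (n + 1))]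
    congr 1
    ring
  have hD2 : Dsum e f 2 = e + f := by
    rw [Dsum_succ_f]
    unfold Dsum
    simp [add_comm]
  have hD3 : Dsum e f 3 = e ^ 2 + e * f + f ^ 2 := by
    have : Dsum e f 3 = f * Dsum e f 2 + e ^ 2 := Dsum_succ_f e f 2
    rw [this, hD2]; ring
  have H : ∀ m : ℕ, T (f ^ (m + 1)) = e ^ (m + 1) + f ^ (m + 1) + Dsum e f (m + 2)
      ∧ T (f ^ (m + 2)) = e ^ (m + 2) + f ^ (m + 2) + Dsum e f (m + 3) := by
    intro m
    induction m with
    | zero =>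
      constructor
      · rw [hD2, pow_one, Tf]; ring
      · have hk : T (f ^ 2) + e * f * T (f ^ 0) = (e + f) * T (f ^ 1) := key 0
        rw [T0, pow_one, Tf] at hk
        rw [hD3]
        linear_combination hk
    | succ m ih =>
      refine ⟨ih.2, ?_⟩
      have hk : T (f ^ (m + 3)) + e * f * T (f ^ (m + 1)) = (e + f) * T (f ^ (m + 2)) :=
        key (m + 1)
      rw [ih.1, ih.2] at hk
      have hrec : Dsum e f (m + 4) = (e + f) * Dsum e f (m + 3) - e * f * Dsum e f (m + 2) :=
        Dsum_rec e f (m + 2)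
      show T (f ^ (m + 3)) = e ^ (m + 3) + f ^ (m + 3) + Dsum e f (m + 4)
      rw [hrec]
      linear_combination hk
  intro k hk
  obtain ⟨m, rfl⟩ : ∃ m, k = m + 1 := ⟨k - 1, by omega⟩
  have h1 := (H m).1
  rw [h1, Dsum_Icc]
  simp only [Nat.add_sub_cancel]
  ring
end

section
/- Let B be a commutative ring, e, f ∈ B, and let S ⊆ B be a subring containing e+f and e·f. Let T : B → B be an S-linear map with T(1) = 3 and T(e) = e + f. Then for every k ≥ 1, T(e^k) = e^k + f^k − Σ_{i=1}^{k-1} e^i f^{k-i}. -/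
open Finset in
private lemma aux1 {B : Type*} [CommRing B] (e f : B) (m : ℕ) :
    ∑ i ∈ Icc 1 (m+1), e^i * f^(m+2-i)
      = f * ∑ i ∈ Icc 1 m, e^i * f^(m+1-i) + e^(m+1) * f := by
  rw [Finset.sum_Icc_succ_top (by omega), Finset.mul_sum]
  congr 1
  · apply Finset.sum_congr rfl
    intro i hi
    rw [Finset.mem_Icc] at hi
    have h : m+2-i = (m+1-i)+1 := by omega
    rw [h, pow_succ]; ring
  · have h : m+2-(m+1) = 1 := by omega
    rw [h, pow_one]

open Finset in
private lemma aux2 {B : Type*} [CommRing B] (e f : B) (m : ℕ) :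
    e * ∑ i ∈ Icc 1 m, e^i * f^(m+1-i)
      = (∑ i ∈ Icc 1 (m+1), e^i * f^(m+2-i)) - e * f^(m+1) := by
  induction m with
  | zero => simp
  | succ n ih =>
    rw [aux1 e f n, aux1 e f (n+1)]
    have : e * (f * ∑ i ∈ Icc 1 n, e ^ i * f ^ (n + 1 - i))
        = f * (e * ∑ i ∈ Icc 1 n, e ^ i * f ^ (n + 1 - i)) := by ring
    rw [mul_add, this, ih]
    ring

open Finset in
theorem stmt_10 {B : Type*} [CommRing B] (e f : B) (S : Subring B)
    (he : e + f ∈ S) (hef : e * f ∈ S) (T : B → B)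
    (Tadd : ∀ x y : B, T (x + y) = T x + T y)
    (Tsmul : ∀ s ∈ S, ∀ x : B, T (s * x) = s * T x)
    (T1 : T 1 = 3) (Te : T e = e + f) :
    ∀ k : ℕ, 1 ≤ k →
      T (e ^ k) = e ^ k + f ^ k - ∑ i ∈ Icc 1 (k - 1), e ^ i * f ^ (k - i) := by
  have hnef : -(e * f) ∈ S := S.neg_mem hef
  have key : ∀ x y : B, T ((e+f) * x + (-(e*f)) * y) = (e+f) * T x - (e*f) * T y := by
    intro x y
    rw [Tadd, Tsmul _ he, Tsmul _ hnef]; ring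
  -- P m : statement for k = m + 1
  set P : ℕ → Prop := fun m =>
    T (e ^ (m+1)) = e ^ (m+1) + f ^ (m+1) - ∑ i ∈ Icc 1 m, e ^ i * f ^ (m+1-i) with hP
  have hpair : ∀ m, P m ∧ P (m+1) := by
    intro m
    induction m with
    | zero =>
      constructor
      · simp [hP, Te]
      · show T (e ^ 2) = e ^ 2 + f ^ 2 - ∑ i ∈ Icc 1 1, e ^ i * f ^ (2 - i)
        have h2 : e ^ 2 = (e+f) * e + (-(e*f)) * 1 := by ring
        rw [h2, key, Te, T1]
        norm_num
        ring
    | succ n ih =>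
      obtain ⟨h1, h2⟩ := ih
      refine ⟨h2, ?_⟩
      show T (e ^ (n+3)) = e ^ (n+3) + f ^ (n+3) - ∑ i ∈ Icc 1 (n+2), e ^ i * f ^ (n+3-i)
      have h2' : T (e ^ (n+2)) = e ^ (n+2) + f ^ (n+2)
          - ∑ i ∈ Icc 1 (n+1), e ^ i * f ^ (n+2-i) := h2
      have hrec : e ^ (n+3) = (e+f) * e ^ (n+2) + (-(e*f)) * e ^ (n+1) := by ring
      rw [hrec, key, h1, h2']
      have s1 := aux1 e f (n+1)
      have s2 := aux2 e f (n+1)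
      have s0 := aux1 e f n
      -- note exponents: n+3-i = (n+1)+2-i etc.
      have e1 : (∑ i ∈ Icc 1 (n+2), e^i * f^(n+3-i))
          = f * ∑ i ∈ Icc 1 (n+1), e^i * f^(n+2-i) + e^(n+2) * f := s1
      have e2 : e * ∑ i ∈ Icc 1 (n+1), e^i * f^(n+2-i)
          = (∑ i ∈ Icc 1 (n+2), e^i * f^(n+3-i)) - e * f^(n+2) := s2
      have e0 : (∑ i ∈ Icc 1 (n+1), e^i * f^(n+2-i))
          = f * ∑ i ∈ Icc 1 n, e^i * f^(n+1-i) + e^(n+1) * f := s0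
      linear_combination e1 - e * e0
  intro k hk
  obtain ⟨m, rfl⟩ : ∃ m, k = m + 1 := ⟨k - 1, by omega⟩
  have := (hpair m).1
  rw [hP] at this
  simpa using this
end

section
/- Let B be a commutative ring, e, f ∈ B, and S ⊆ B a subring with e+f ∈ S and e·f ∈ S. Let T : B → B be S-linear with T(1) = 3 and T(f) = 2e + 2f. Then for all k ≥ 1 and l ≥ 1, T(e^k f^{l+k}) = (ef)^k · (2e^l + 2f^l + Σ_{i=1}^{l-1} e^i f^{l-i}), and T(e^k f^k) = 3 e^k f^k. -/
open Finset in
theorem stmt_11 {B : Type*} [CommRing B] (e f : B) (S : Subring B)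
    (he : e + f ∈ S) (hef : e * f ∈ S) (T : B → B)
    (Tadd : ∀ x y : B, T (x + y) = T x + T y)
    (Tsmul : ∀ s ∈ S, ∀ x : B, T (s * x) = s * T x)
    (T1 : T 1 = 3) (Tf : T f = 2 * e + 2 * f) :
    (∀ k l : ℕ, 1 ≤ k → 1 ≤ l →
      T (e ^ k * f ^ (l + k)) =
        (e * f) ^ k * (2 * e ^ l + 2 * f ^ l + ∑ i ∈ Icc 1 (l - 1), e ^ i * f ^ (l - i))) ∧
    (∀ k : ℕ, 1 ≤ k → T (e ^ k * f ^ k) = 3 * (e ^ k * f ^ k)) := by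
  set G : ℕ → B := fun l => ∑ i ∈ range (l + 1), e ^ i * f ^ (l - i) with hGdef
  -- basic recurrences for G
  have hG1 : ∀ n : ℕ, G (n + 1) = f ^ (n + 1) + e * G n := by
    intro n
    have hs : ∑ i ∈ range (n + 1), e ^ (i + 1) * f ^ (n + 1 - (i + 1)) =
        e * ∑ i ∈ range (n + 1), e ^ i * f ^ (n - i) := by
      rw [Finset.mul_sum]
      apply Finset.sum_congr rfl
      intro i hi
      have h : n + 1 - (i + 1) = n - i := by omega
      rw [h, pow_succ]
      ring
    rw [hGdef]
    simp only []
    rw [Finset.sum_range_succ', hs]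
    simp only [pow_zero, one_mul, Nat.sub_zero]
    ring
  have hG2 : ∀ n : ℕ, G (n + 1) = e ^ (n + 1) + f * G n := by
    intro n
    rw [hGdef]
    simp only []
    rw [Finset.sum_range_succ]
    simp only [Nat.sub_self, pow_zero, mul_one]
    rw [Finset.mul_sum]
    rw [add_comm]
    congr 1
    apply Finset.sum_congr rfl
    intro i hi
    have hi' : i ≤ n := by simpa [Nat.lt_succ_iff] using hi
    have : n + 1 - i = (n - i) + 1 := by omega
    rw [this, pow_succ]
    ring
  -- recurrence for T on powers of f
  have hneg : -(e * f) ∈ S := S.neg_mem hef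
  have hTrec : ∀ n : ℕ, T (f ^ (n + 2)) = (e + f) * T (f ^ (n + 1)) + (-(e * f)) * T (f ^ n) := by
    intro n
    have hsplit : f ^ (n + 2) = (e + f) * f ^ (n + 1) + (-(e * f)) * f ^ n := by ring
    rw [hsplit, Tadd, Tsmul _ he, Tsmul _ hneg]
  -- the key formula T (f^(n+1)) = e^(n+1) + f^(n+1) + G (n+1)
  have key : ∀ n : ℕ, T (f ^ (n + 1)) = e ^ (n + 1) + f ^ (n + 1) + G (n + 1) := by
    have main : ∀ n : ℕ, T (f ^ (n + 1)) = e ^ (n + 1) + f ^ (n + 1) + G (n + 1) ∧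
        T (f ^ (n + 2)) = e ^ (n + 2) + f ^ (n + 2) + G (n + 2) := by
      intro n
      induction n with
      | zero =>
        constructor
        · have : G 1 = f + e := by
            rw [hGdef]; simp [Finset.sum_range_succ]
          rw [this, pow_one, Tf]
          ring
        · have h2 : T (f ^ 2) = (e + f) * T (f ^ 1) + (-(e * f)) * T (f ^ 0) := hTrec 0
          have hG2' : G 2 = f ^ 2 + e * (f + e) := by
            have : G 1 = f + e := by
              rw [hGdef]; simp [Finset.sum_range_succ]
            rw [hG1 1, this]
          rw [h2, hG2']
          simp only [pow_one, pow_zero, Tf, T1]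
          ring
      | succ m ih =>
        refine ⟨ih.2, ?_⟩
        show T (f ^ (m + 3)) = e ^ (m + 3) + f ^ (m + 3) + G (m + 3)
        have h3 : T (f ^ (m + 3)) =
            (e + f) * T (f ^ (m + 2)) + (-(e * f)) * T (f ^ (m + 1)) := hTrec (m + 1)
        rw [h3, ih.1, ih.2]
        have e1 : G (m + 3) = f ^ (m + 3) + e * G (m + 2) := hG1 (m + 2)
        have e2 : G (m + 3) = e ^ (m + 3) + f * G (m + 2) := hG2 (m + 2)
        have e3 : G (m + 2) = f ^ (m + 2) + e * G (m + 1) := hG1 (m + 1)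
        have e4 : G (m + 2) = e ^ (m + 2) + f * G (m + 1) := hG2 (m + 1)
        linear_combination -e1 + f * e3
    intro n; exact (main n).1
  -- rewrite G in the Icc form
  have hIcc : ∀ n : ℕ, e ^ (n + 1) + f ^ (n + 1) + G (n + 1) =
      2 * e ^ (n + 1) + 2 * f ^ (n + 1) + ∑ i ∈ Icc 1 n, e ^ i * f ^ (n + 1 - i) := by
    intro n
    have hG : G (n + 1) = e ^ (n + 1) + f ^ (n + 1) + ∑ i ∈ Icc 1 n, e ^ i * f ^ (n + 1 - i) := by
      rw [hGdef]
      simp only []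
      rw [Finset.sum_range_succ', Finset.sum_range_succ]
      have hI : ∑ i ∈ Icc 1 n, e ^ i * f ^ (n + 1 - i) =
          ∑ i ∈ range n, e ^ (1 + i) * f ^ (n + 1 - (1 + i)) := by
        rw [← Finset.Ico_add_one_right_eq_Icc, Finset.sum_Ico_eq_sum_range]
        simp
      rw [hI]
      have : ∀ i ∈ range n, e ^ (1 + i) * f ^ (n + 1 - (1 + i)) =
          e ^ (i + 1) * f ^ (n + 1 - (i + 1)) := by
        intro i hi; rw [add_comm 1 i]
      rw [Finset.sum_congr rfl this]
      simp only [Nat.sub_self, pow_zero, mul_one, one_mul, Nat.sub_zero]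
      ring
    rw [hG]; ring
  have keyIcc : ∀ l : ℕ, 1 ≤ l → T (f ^ l) =
      2 * e ^ l + 2 * f ^ l + ∑ i ∈ Icc 1 (l - 1), e ^ i * f ^ (l - i) := by
    intro l hl
    obtain ⟨n, rfl⟩ := Nat.exists_eq_add_of_le hl
    rw [add_comm 1 n] at *
    rw [key n, hIcc n]
    simp
  constructor
  · intro k l hk hl
    have hpow : (e * f) ^ k ∈ S := S.pow_mem hef k
    have : e ^ k * f ^ (l + k) = (e * f) ^ k * f ^ l := by
      rw [mul_pow, pow_add]; ring
    rw [this, Tsmul _ hpow, keyIcc l hl]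
  · intro k hk
    have hpow : (e * f) ^ k ∈ S := S.pow_mem hef k
    have : e ^ k * f ^ k = (e * f) ^ k * 1 := by rw [mul_pow, mul_one]
    rw [this, Tsmul _ hpow, T1]
    ring
end
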